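/- arXiv:1911.00130 — 8 statements merged into one kernel-verified Lean document; each statement's English description precedes it below -/
import Mathlib

section
/- Let G, M be abelian groups and (h, c) an abelian 3-cocycle on G with values in M. Then the alternating sum over all six permutations σ of the arguments, ∑_{σ ∈ S₃} sgn(σ)·h(x_{σ(1)}, x_{σ(2)}, x_{σ(3)}), equals zero for all x₁, x₂, x₃ ∈ G. -/
/- Hexagon (A) writes `h y z x + h x y z - h y x z` as `c x y + c x z - c x (y + z)`,
which is symmetric in `y` and `z`; the alternating sum is the difference of the two sides. -/

theorem hexagon_sub_symm {G M : Type*} [AddCommMagma G] [AddCommGroup M]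
    (h : G → G → G → M) (c : G → G → M)
    (hA : ∀ x y z : G, h y z x + c x (y + z) + h x y z = c x z + h y x z + c x y)
    (x y z : G) :
    h y z x + h x y z - h y x z = h z y x + h x z y - h z x y := by
  have hyz := hA x y z
  have hzy := hA x z y
  rw [add_comm z y] at hzy
  linear_combination (norm := abel) hyz - hzy

theorem stmt_8_general {G M : Type*} [AddCommGroup G] [AddCommGroup M]
    (h : G → G → G → M) (c : G → G → M)
    (hA : ∀ x y z : G,
      h y z x + c x (y + z) + h x y z = c x z + h y x z + c x y) :
    ∀ x y z : G,
      h x y z + h y z x + h z x y - h y x z - h x z y - h z y x = 0 := by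
  intro x y z
  linear_combination (norm := abel) hexagon_sub_symm h c hA x y z

/-- For an abelian 3-cocycle `(h, c)`, the alternating sum of `h` over all six
permutations of the arguments vanishes. -/
theorem stmt_8 {G M : Type*} [AddCommGroup G] [AddCommGroup M]
    (h : G → G → G → M) (c : G → G → M)
    (hcoc : ∀ u x y z : G,
      h x y z + h u (x + y) z + h u x y = h u x (y + z) + h (u + x) y z)
    (hnorm : ∀ x z : G, h x 0 z = 0)
    (hA : ∀ x y z : G,
      h y z x + c x (y + z) + h x y z = c x z + h y x z + c x y)
    (hA' : ∀ x y z : G,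
      -h z x y + c (x + y) z - h x y z = c x z - h x z y + c y z) :
    ∀ x y z : G,
      h x y z + h y z x + h z x y - h y x z - h x z y - h z y x = 0 :=
  stmt_8_general h c hA
end

section
/- Let G, M be abelian groups and (h, c) an abelian 3-cocycle on G with values in M. Then W(x,y) := c(x,y) + c(y,x) is Z-bilinear and symmetric. -/
theorem stmt_9_general {G M : Type*} [AddCommGroup G] [AddCommGroup M]
    (h : G → G → G → M) (c : G → G → M)
    (hA : ∀ x y z : G,
      h y z x + c x (y + z) + h x y z = c x z + h y x z + c x y)
    (hA' : ∀ x y z : G,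
      -h z x y + c (x + y) z - h x y z = c x z - h x z y + c y z) :
    (∀ x y : G, c x y + c y x = c y x + c x y) ∧
    (∀ x x' y : G,
      c (x + x') y + c y (x + x') = (c x y + c y x) + (c x' y + c y x')) ∧
    (∀ x y y' : G,
      c x (y + y') + c (y + y') x = (c x y + c y x) + (c x y' + c y' x)) := by
  -- In the sum of the two hexagon axioms (A) and (A') all values of `h` cancel.
  refine ⟨fun x y => add_comm _ _, fun x x' y => ?_, fun x y y' => ?_⟩
  · linear_combination (norm := abel) hA' x x' y + hA y x x'
  · linear_combination (norm := abel) hA x y y' + hA' y y' x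

/-- For an abelian 3-cocycle `(h, c)`, the map `W(x,y) := c(x,y) + c(y,x)` is
ℤ-bilinear and symmetric. -/
theorem stmt_9 {G M : Type*} [AddCommGroup G] [AddCommGroup M]
    (h : G → G → G → M) (c : G → G → M)
    (hcoc : ∀ u x y z : G,
      h x y z + h u (x + y) z + h u x y = h u x (y + z) + h (u + x) y z)
    (hnorm : ∀ x z : G, h x 0 z = 0)
    (hA : ∀ x y z : G,
      h y z x + c x (y + z) + h x y z = c x z + h y x z + c x y)
    (hA' : ∀ x y z : G,
      -h z x y + c (x + y) z - h x y z = c x z - h x z y + c y z) :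
    (∀ x y : G, c x y + c y x = c y x + c x y) ∧
    (∀ x x' y : G,
      c (x + x') y + c y (x + x') = (c x y + c y x) + (c x' y + c y x')) ∧
    (∀ x y y' : G,
      c x (y + y') + c (y + y') x = (c x y + c y x) + (c x y' + c y' x)) :=
  stmt_9_general h c hA hA'
end

section
/- Let G, M be abelian groups and (h, c) an abelian 3-cocycle on G with values in M. Then for all y, z ∈ G: c(y+z, y+z) - c(y,y) - c(z,z) = c(y,z) + c(z,y). -/
theorem stmt_10_general {G M : Type*} [AddCommGroup G] [AddCommGroup M]
    (h : G → G → G → M) (c : G → G → M)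
    (hcoc : ∀ u x y z : G,
      h x y z + h u (x + y) z + h u x y = h u x (y + z) + h (u + x) y z)
    (hA : ∀ x y z : G,
      h y z x + c x (y + z) + h x y z = c x z + h y x z + c x y)
    (hA' : ∀ x y z : G,
      -h z x y + c (x + y) z - h x y z = c x z - h x z y + c y z) :
    ∀ y z : G, c (y + z) (y + z) - c y y - c z z = c y z + c z y := by
  intro y z
  -- (A') splits the first argument of c(y+z, y+z), (A) then splits the second arguments of
  -- c(y, y+z) and c(z, y+z), and the cocycle identity at (y, z, y, z) cancels the leftover h-terms.
  have hcoc_yzyz := hcoc y z y z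
  rw [add_comm z y] at hcoc_yzyz
  linear_combination (norm := abel) hA' y z (y + z) + hA y y z + hA z y z - hcoc_yzyz

/-- For an abelian 3-cocycle `(h, c)`:
`c(y+z, y+z) - c(y,y) - c(z,z) = c(y,z) + c(z,y)`. -/
theorem stmt_10 {G M : Type*} [AddCommGroup G] [AddCommGroup M]
    (h : G → G → G → M) (c : G → G → M)
    (hcoc : ∀ u x y z : G,
      h x y z + h u (x + y) z + h u x y = h u x (y + z) + h (u + x) y z)
    (hnorm : ∀ x z : G, h x 0 z = 0)
    (hA : ∀ x y z : G,
      h y z x + c x (y + z) + h x y z = c x z + h y x z + c x y)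
    (hA' : ∀ x y z : G,
      -h z x y + c (x + y) z - h x y z = c x z - h x z y + c y z) :
    ∀ y z : G, c (y + z) (y + z) - c y y - c z z = c y z + c z y :=
  stmt_10_general h c hcoc hA hA'
end

section
/- Let G, M be abelian groups and (h, c) an abelian 3-cocycle on G with values in M. Then the trace q(x) := c(x,x) is a quadratic form, i.e., q(-x) = q(x) for all x ∈ G and b(x,y) := q(x+y) - q(x) - q(y) is Z-bilinear. -/
/-!
The polarization of the trace is the symmetrized braiding: `c(x+y,x+y) - c(x,x) - c(y,y) =
c(x,y) + c(y,x)`, by combining both hexagon axioms with the pentagon axiom. The two hexagon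
axioms say that `c` is additive in each variable up to associator terms, and these terms cancel
in the symmetrization, so the polarization is biadditive. Evenness of the trace comes from the
same three axioms applied at `(x, -x)`, after the normalization kills the terms at `0`.
-/

/-- `h` is the associator and `c` the braiding; `braid_left` and `braid_right` are the two
hexagon axioms (A) and (A'). -/
structure IsAbelian3Cocycle {G M : Type*} [AddCommGroup G] [AddCommGroup M]
    (h : G → G → G → M) (c : G → G → M) : Prop where
  cocycle : ∀ u x y z : G,
    h x y z + h u (x + y) z + h u x y = h u x (y + z) + h (u + x) y z
  normalized : ∀ x z : G, h x 0 z = 0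
  braid_left : ∀ x y z : G,
    h y z x + c x (y + z) + h x y z = c x z + h y x z + c x y
  braid_right : ∀ x y z : G,
    -h z x y + c (x + y) z - h x y z = c x z - h x z y + c y z

namespace IsAbelian3Cocycle

variable {G M : Type*} [AddCommGroup G] [AddCommGroup M]
  {h : G → G → G → M} {c : G → G → M} (H : IsAbelian3Cocycle h c)
include H

theorem assoc_zero_left (y z : G) : h 0 y z = 0 := by
  have e := H.cocycle 0 0 y z
  simp only [zero_add, H.normalized] at e
  linear_combination (norm := abel) e

theorem assoc_zero_right (u x : G) : h u x 0 = 0 := by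
  have e := H.cocycle u x 0 0
  simp only [add_zero, H.normalized] at e
  linear_combination (norm := abel) e

theorem braid_zero_right (x : G) : c x 0 = 0 := by
  have e := H.braid_left x 0 0
  simp only [add_zero, H.normalized, H.assoc_zero_left] at e
  linear_combination (norm := abel) -e

theorem braid_zero_left (z : G) : c 0 z = 0 := by
  have e := H.braid_right 0 0 z
  simp only [add_zero, H.normalized, H.assoc_zero_left] at e
  linear_combination (norm := abel) -e

theorem trace_add_sub (x y : G) :
    c (x + y) (x + y) - c x x - c y y = c x y + c y x := by
  have e := H.cocycle x y x y
  rw [add_comm y x] at e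
  linear_combination (norm := abel)
    H.braid_right x y (x + y) + H.braid_left x x y + H.braid_left y x y - e

theorem braid_symm_add_left (x x' y : G) :
    c (x + x') y + c y (x + x') = (c x y + c y x) + (c x' y + c y x') := by
  linear_combination (norm := abel) H.braid_right x x' y + H.braid_left y x x'

theorem trace_neg (x : G) : c (-x) (-x) = c x x := by
  have e₁ := H.braid_right x (-x) (-x)
  have e₂ := H.braid_left x x (-x)
  have e₃ := H.cocycle x (-x) x (-x)
  rw [add_neg_cancel] at e₁ e₂
  rw [neg_add_cancel, add_neg_cancel] at e₃
  simp only [H.braid_zero_left, H.braid_zero_right, H.normalized, H.assoc_zero_left,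
    H.assoc_zero_right] at e₁ e₂ e₃
  linear_combination (norm := abel) -e₁ + e₂ - e₃

end IsAbelian3Cocycle

/-- For an abelian 3-cocycle `(h, c)`, the trace `q(x) := c(x,x)` is a quadratic
form: `q(-x) = q(x)` and the polarization `b(x,y) := q(x+y) - q(x) - q(y)` is
ℤ-bilinear (additive in each variable). -/
theorem stmt_11 {G M : Type*} [AddCommGroup G] [AddCommGroup M]
    (h : G → G → G → M) (c : G → G → M)
    (hcoc : ∀ u x y z : G,
      h x y z + h u (x + y) z + h u x y = h u x (y + z) + h (u + x) y z)
    (hnorm : ∀ x z : G, h x 0 z = 0)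
    (hA : ∀ x y z : G,
      h y z x + c x (y + z) + h x y z = c x z + h y x z + c x y)
    (hA' : ∀ x y z : G,
      -h z x y + c (x + y) z - h x y z = c x z - h x z y + c y z) :
    (∀ x : G, c (-x) (-x) = c x x) ∧
    (∀ x x' y : G,
      (c (x + x' + y) (x + x' + y) - c (x + x') (x + x') - c y y)
        = (c (x + y) (x + y) - c x x - c y y)
          + (c (x' + y) (x' + y) - c x' x' - c y y)) ∧
    (∀ x y y' : G,
      (c (x + (y + y')) (x + (y + y')) - c x x - c (y + y') (y + y'))
        = (c (x + y) (x + y) - c x x - c y y)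
          + (c (x + y') (x + y') - c x x - c y' y')) := by
  have H : IsAbelian3Cocycle h c := ⟨hcoc, hnorm, hA, hA'⟩
  refine ⟨H.trace_neg, fun x x' y => ?_, fun x y y' => ?_⟩
  · simp only [H.trace_add_sub]
    exact H.braid_symm_add_left x x' y
  · simp only [H.trace_add_sub]
    linear_combination (norm := abel) H.braid_symm_add_left y y' x
end

section
/- Let G be a free abelian group and M any abelian group. Then every quadratic form q : G → M is polar: there exists a Z-bilinear form t : G × G → M with q(x+y) - q(x) - q(y) = t(x,y) + t(y,x) for all x, y ∈ G. -/
/-!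
The polarization `b x y = q (x + y) - q x - q y` is symmetric and additive in `x`, and evenness
of `q` gives `b x x = 2 q x`; together these force `q (n • x) = n² q x`, so `q` is a quadratic
map over `ℤ`. On a free module every quadratic map is `x ↦ t x x` for a bilinear `t`
(upper-triangular in an ordered basis), and then `b x y = t x y + t y x`.
-/

open QuadraticMap

section

variable {G M : Type*} [AddCommGroup G] [AddCommGroup M] {f : G → M}

theorem polar_zsmul_left_of_polar_add_left
    (hadd : ∀ x x' y, polar f (x + x') y = polar f x y + polar f x' y) (n : ℤ) (x y : G) :
    polar f (n • x) y = n • polar f x y :=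
  (AddMonoidHom.mk' (polar f · y) (hadd · · y)).map_zsmul n x

theorem map_zero_of_polar_add_left
    (hadd : ∀ x x' y, polar f (x + x') y = polar f x y + polar f x' y) : f 0 = 0 := by
  simpa [polar] using polar_zsmul_left_of_polar_add_left hadd 0 0 0

theorem polar_self_of_polar_add_left (hneg : ∀ x, f (-x) = f x)
    (hadd : ∀ x x' y, polar f (x + x') y = polar f x y + polar f x' y) (x : G) :
    polar f x x = 2 • f x := by
  have h0 := map_zero_of_polar_add_left hadd
  have h := hadd x (-x) x
  rw [add_neg_cancel, show polar f 0 x = 0 by simp [polar, h0],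
    show polar f (-x) x = -(2 • f x) by simp [polar, h0, hneg, two_nsmul]; abel] at h
  exact add_neg_eq_zero.mp h.symm

theorem map_zsmul_of_polar_add_left (hneg : ∀ x, f (-x) = f x)
    (hadd : ∀ x x' y, polar f (x + x') y = polar f x y + polar f x' y) (n : ℤ) (x : G) :
    f (n • x) = (n * n) • f x := by
  have hsucc (m : ℤ) : f ((m + 1) • x) = f (m • x) + f x + m • 2 • f x := by
    rw [add_smul, one_smul, QuadraticMap.map_add f, polar_zsmul_left_of_polar_add_left hadd,
      polar_self_of_polar_add_left hneg hadd]
  induction n using Int.induction_on with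
  | zero => simp [map_zero_of_polar_add_left hadd]
  | succ m ih => rw [hsucc, ih]; module
  | pred m ih =>
    have h := hsucc (-m - 1)
    rw [sub_add_cancel, ih] at h
    rw [eq_sub_of_add_eq (eq_sub_of_add_eq h.symm)]
    module

end

def QuadraticMap.ofIntPolar {G M : Type*} [AddCommGroup G] [AddCommGroup M] (f : G → M)
    (hneg : ∀ x, f (-x) = f x)
    (hadd : ∀ x x' y, polar f (x + x') y = polar f x y + polar f x' y) : QuadraticMap ℤ G M :=
  ofPolar f (map_zsmul_of_polar_add_left hneg hadd) hadd
    (polar_zsmul_left_of_polar_add_left hadd)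

theorem stmt_15_general {G M : Type*} [AddCommGroup G] [Module.Free ℤ G]
    [AddCommGroup M] (q : G → M)
    (hneg : ∀ x : G, q (-x) = q x)
    (hbil₁ : ∀ x x' y : G, (q (x + x' + y) - q (x + x') - q y)
        = (q (x + y) - q x - q y) + (q (x' + y) - q x' - q y)) :
    ∃ t : G → G → M,
      (∀ x x' y : G, t (x + x') y = t x y + t x' y) ∧
      (∀ x y y' : G, t x (y + y') = t x y + t x y') ∧
      (∀ x y : G, q (x + y) - q x - q y = t x y + t y x) := by
  obtain ⟨B, hB⟩ :=
    LinearMap.BilinMap.toQuadraticMap_surjective (QuadraticMap.ofIntPolar q hneg hbil₁)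
  refine ⟨fun x y => B x y, fun x x' y => by simp, fun x y y' => by simp, fun x y => ?_⟩
  have h := LinearMap.BilinMap.polar_toQuadraticMap (B := B) x y
  rw [hB] at h
  exact h

/-- Over a free abelian group `G`, every quadratic form `q : G → M` is polar:
there is a ℤ-bilinear `t` with `q(x+y) - q(x) - q(y) = t(x,y) + t(y,x)`. -/
theorem stmt_15 {G M : Type*} [AddCommGroup G] [Module.Free ℤ G]
    [AddCommGroup M] (q : G → M)
    (hneg : ∀ x : G, q (-x) = q x)
    (hbil₁ : ∀ x x' y : G, (q (x + x' + y) - q (x + x') - q y)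
        = (q (x + y) - q x - q y) + (q (x' + y) - q x' - q y))
    (hbil₂ : ∀ x y y' : G, (q (x + (y + y')) - q x - q (y + y'))
        = (q (x + y) - q x - q y) + (q (x + y') - q x - q y')) :
    ∃ t : G → G → M,
      (∀ x x' y : G, t (x + x') y = t x y + t x' y) ∧
      (∀ x y y' : G, t x (y + y') = t x y + t x y') ∧
      (∀ x y : G, q (x + y) - q x - q y = t x y + t y x) :=
  stmt_15_general q hneg hbil₁
end

section
/- Let G, M be abelian groups, t : G × G → M a Z-bilinear map, and q : G → M a quadratic form. Then q is polar for t (i.e., q(x+y) - q(x) - q(y) = t(x,y) + t(y,x) for all x, y) if and only if the map x ↦ q(x) - t(x,x) is a group homomorphism G → M taking values in the 2-torsion of M (equivalently, it factors as a homomorphism G/2G → {m ∈ M : 2m = 0}). -/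
/-! Writing `d x = q x - t x x`, bilinearity of `t` gives
`q (x + y) - q x - q y - (t x y + t y x) = d (x + y) - (d x + d y)`, so `q` is polar for `t`
exactly when `d` is additive. An additive `d` that is even (as `q` and `x ↦ t x x` are) satisfies
`d x + d x = d x + d (-x) = d 0 = 0`. -/

section Bilinear

variable {G M : Type*} [AddCommGroup G] [AddCommGroup M] {t : G → G → M}

theorem two_zsmul_eq_zero_of_map_add_of_map_neg {f : G → M}
    (hadd : ∀ x y, f (x + y) = f x + f y) (heven : ∀ x, f (-x) = f x) (x : G) :
    (2 : ℤ) • f x = 0 := by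
  calc (2 : ℤ) • f x = f (x + -x) := by rw [two_zsmul, hadd, heven]
    _ = 0 := by rw [add_neg_cancel]; exact (AddMonoidHom.mk' f hadd).map_zero

variable (ht₁ : ∀ x x' y, t (x + x') y = t x y + t x' y)
  (ht₂ : ∀ x y y', t x (y + y') = t x y + t x y')
include ht₁ ht₂

theorem diag_add_of_biadditive (x y : G) :
    t (x + y) (x + y) = t x x + t x y + t y x + t y y := by
  rw [ht₁, ht₂, ht₂]
  abel

theorem diag_neg_of_biadditive (x : G) : t (-x) (-x) = t x x := by
  have hleft : t (-x) (-x) = -t x (-x) :=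
    map_neg (AddMonoidHom.mk' (fun a => t a (-x)) fun a b => ht₁ a b (-x)) x
  have hright : t x (-x) = -t x x := map_neg (AddMonoidHom.mk' (t x) (ht₂ x)) x
  rw [hleft, hright, neg_neg]

theorem polar_defect_eq_of_biadditive (q : G → M) (x y : G) :
    q (x + y) - q x - q y - (t x y + t y x)
      = q (x + y) - t (x + y) (x + y) - ((q x - t x x) + (q y - t y y)) := by
  rw [diag_add_of_biadditive ht₁ ht₂]
  abel

end Bilinear

theorem stmt_16_general {G M : Type*} [AddCommGroup G] [AddCommGroup M]
    (t : G → G → M) (q : G → M)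
    (ht₁ : ∀ x x' y : G, t (x + x') y = t x y + t x' y)
    (ht₂ : ∀ x y y' : G, t x (y + y') = t x y + t x y')
    (hneg : ∀ x : G, q (-x) = q x) :
    (∀ x y : G, q (x + y) - q x - q y = t x y + t y x) ↔
    ((∀ x y : G, q (x + y) - t (x + y) (x + y)
        = (q x - t x x) + (q y - t y y)) ∧
      (∀ x : G, (2 : ℤ) • (q x - t x x) = 0)) := by
  have hdefect := polar_defect_eq_of_biadditive ht₁ ht₂ q
  constructor
  · intro hpolar
    have hadd : ∀ x y : G, q (x + y) - t (x + y) (x + y) = (q x - t x x) + (q y - t y y) :=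
      fun x y => sub_eq_zero.mp <| by rw [← hdefect, hpolar, sub_self]
    refine ⟨hadd, two_zsmul_eq_zero_of_map_add_of_map_neg hadd fun x => ?_⟩
    rw [hneg, diag_neg_of_biadditive ht₁ ht₂]
  · rintro ⟨hadd, -⟩ x y
    exact sub_eq_zero.mp <| by rw [hdefect, hadd, sub_self]

/-- Let `t` be ℤ-bilinear and `q` a quadratic form. Then `q` is polar for `t`
iff `x ↦ q(x) - t(x,x)` is a group homomorphism with values in the 2-torsion
of `M` (hence factoring through `G/2G`). -/
theorem stmt_16 {G M : Type*} [AddCommGroup G] [AddCommGroup M]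
    (t : G → G → M) (q : G → M)
    (ht₁ : ∀ x x' y : G, t (x + x') y = t x y + t x' y)
    (ht₂ : ∀ x y y' : G, t x (y + y') = t x y + t x y')
    (hneg : ∀ x : G, q (-x) = q x)
    (hbil₁ : ∀ x x' y : G, (q (x + x' + y) - q (x + x') - q y)
        = (q (x + y) - q x - q y) + (q (x' + y) - q x' - q y))
    (hbil₂ : ∀ x y y' : G, (q (x + (y + y')) - q x - q (y + y'))
        = (q (x + y) - q x - q y) + (q (x + y') - q x - q y')) :
    (∀ x y : G, q (x + y) - q x - q y = t x y + t y x) ↔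
    ((∀ x y : G, q (x + y) - t (x + y) (x + y)
        = (q x - t x x) + (q y - t y y)) ∧
      (∀ x : G, (2 : ℤ) • (q x - t x x) = 0)) :=
  stmt_16_general t q ht₁ ht₂ hneg
end

section
/- Let G, M be abelian groups, t : G × G → M a Z-bilinear form, and q̄ : G → M a group homomorphism whose image consists of 2-torsion elements. Fix a basis (β_i)_{i∈I} of the F_2-vector space G/2G and lifts of the β_i to G. Define c(x,y) := t(x,y) + ∑_{i∈I} x̄_i · ȳ_i · q̄(β_i), where x̄_i, ȳ_i ∈ F_2 are the coordinates of the images of x, y in G/2G with respect to the basis. Then c : G × G → M is Z-bilinear, and hence (h, c) with h ≡ 0 is an abelian 3-cocycle. -/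
/-!
The correction term `∑ᵢ x̄ᵢ ȳᵢ q̄(βᵢ)` only depends on the images of `x, y` in `G/2G`, and
there it is a diagonal form in the basis coordinates with values `q̄(βᵢ)` of order dividing 2.
Since `k • m` only depends on `k mod 2` for such `m`, the map `a ↦ a.val • q̄(βᵢ)` is additive
on `𝔽₂`, which makes the diagonal form biadditive; adding the bilinear `t` keeps it so.
-/

theorem ZMod.val_add_nsmul {n : ℕ} [NeZero n] {A : Type*} [AddMonoid A] {m : A}
    (hm : n • m = 0) (a b : ZMod n) : (a + b).val • m = a.val • m + b.val • m := by
  rw [ZMod.val_add, ← nsmul_eq_mod_nsmul _ hm, add_nsmul]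

namespace Module.Basis

variable {n : ℕ} [NeZero n] {I V M : Type*} [AddCommGroup V] [Module (ZMod n) V]
  [AddCommMonoid M]

/-- Coefficients act on `M` through `ZMod.val`, which is additive only on `n`-torsion `m i`. -/
noncomputable def diagForm (B : Basis I (ZMod n) V) (m : I → M) (v w : V) : M :=
  ∑ i ∈ (B.repr v).support, (B.repr v i * B.repr w i).val • m i

variable (B : Basis I (ZMod n) V) {m : I → M} (hm : ∀ i, n • m i = 0)
include hm

theorem diagForm_add_left (v v' w : V) :
    B.diagForm m (v + v') w = B.diagForm m v w + B.diagForm m v' w := by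
  have hsum : ∀ u, B.diagForm m u w =
      (B.repr u).sum fun i a => (a * B.repr w i).val • m i := fun _ => rfl
  rw [hsum, hsum, hsum, map_add]
  refine Finsupp.sum_add_index' (fun _ => by simp) fun i a a' => ?_
  rw [add_mul, ZMod.val_add_nsmul (hm i)]

theorem diagForm_add_right (v w w' : V) :
    B.diagForm m v (w + w') = B.diagForm m v w + B.diagForm m v w' := by
  rw [diagForm, diagForm, diagForm, ← Finset.sum_add_distrib]
  refine Finset.sum_congr rfl fun i _ => ?_
  rw [map_add, Finsupp.add_apply, mul_add, ZMod.val_add_nsmul (hm i)]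

end Module.Basis

theorem stmt_17_general {G M V : Type*} [AddCommGroup G] [AddCommGroup M]
    [AddCommGroup V] [Module (ZMod 2) V] {I : Type*}
    (π : G →+ V)
    (B : Module.Basis I (ZMod 2) V) (lift : I → G)
    (t : G → G → M)
    (ht₁ : ∀ x x' y : G, t (x + x') y = t x y + t x' y)
    (ht₂ : ∀ x y y' : G, t x (y + y') = t x y + t x y')
    (qb : G →+ M) (hqb2 : ∀ x : G, (2 : ℤ) • qb x = 0)
    (c : G → G → M)
    (hc : ∀ x y : G, c x y = t x y +
      ∑ i ∈ (B.repr (π x)).support,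
        ((B.repr (π x)) i * (B.repr (π y)) i).val • qb (lift i)) :
    (∀ x x' y : G, c (x + x') y = c x y + c x' y) ∧
    (∀ x y y' : G, c x (y + y') = c x y + c x y') := by
  have hm : ∀ i, 2 • qb (lift i) = 0 := fun i => by
    rw [← natCast_zsmul]
    exact hqb2 _
  have hc' : ∀ x y, c x y = t x y + B.diagForm (fun i => qb (lift i)) (π x) (π y) := hc
  constructor
  · intro x x' y
    rw [hc', hc', hc', ht₁, map_add, B.diagForm_add_left hm, add_add_add_comm]
  · intro x y y'
    rw [hc', hc', hc', ht₂, map_add, B.diagForm_add_right hm, add_add_add_comm]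

/-- Let `t : G × G → M` be ℤ-bilinear and `q̄ : G → M` a homomorphism with
2-torsion values factoring through the quotient map `π : G → G/2G`.  Fix a
basis `(β i)` of the `𝔽₂`-vector space `G/2G` together with lifts of the basis
vectors to `G`.  Then `c(x,y) := t(x,y) + ∑ᵢ x̄ᵢ ȳᵢ q̄(βᵢ)` (with `x̄ᵢ, ȳᵢ ∈ 𝔽₂`
the basis coordinates of the images of `x, y` in `G/2G`) is ℤ-bilinear; hence
`(h, c)` with `h ≡ 0` is an abelian 3-cocycle. -/
theorem stmt_17 {G M V : Type*} [AddCommGroup G] [AddCommGroup M]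
    [AddCommGroup V] [Module (ZMod 2) V] {I : Type*}
    (π : G →+ V) (hπsurj : Function.Surjective π)
    (hπ2 : ∀ x : G, π ((2 : ℤ) • x) = 0)
    (B : Module.Basis I (ZMod 2) V) (lift : I → G) (hlift : ∀ i, π (lift i) = B i)
    (t : G → G → M)
    (ht₁ : ∀ x x' y : G, t (x + x') y = t x y + t x' y)
    (ht₂ : ∀ x y y' : G, t x (y + y') = t x y + t x y')
    (qb : G →+ M) (hqb2 : ∀ x : G, (2 : ℤ) • qb x = 0)
    (c : G → G → M)
    (hc : ∀ x y : G, c x y = t x y +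
      ∑ i ∈ (B.repr (π x)).support,
        ((B.repr (π x)) i * (B.repr (π y)) i).val • qb (lift i)) :
    (∀ x x' y : G, c (x + x') y = c x y + c x' y) ∧
    (∀ x y y' : G, c x (y + y') = c x y + c x y') :=
  stmt_17_general π B lift t ht₁ ht₂ qb hqb2 c hc
end

section
/- Let G, M be abelian groups and q a polar quadratic form, written as q(x) = t(x,x) + q̄(x) with t : G × G → M Z-bilinear and q̄ : G → M a homomorphism into the 2-torsion of M factoring through G/2G. Fix an F_2-basis (β_i)_{i∈I} of G/2G, and define the Z-bilinear form c(x,y) := t(x,y) + ∑_{i∈I} x̄_i · ȳ_i · q̄(β_i), where x̄_i, ȳ_i are the basis coordinates of x, y in G/2G. Then the trace of c recovers q: c(x,x) = q(x) for all x ∈ G. -/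
/-! Over `𝔽₂` every coordinate satisfies `x̄ᵢ² = x̄ᵢ`, so the diagonal correction term
`∑ᵢ x̄ᵢ q̄(βᵢ)` is `q̄` applied to a lift of `x̄`, which is `q̄(x)` since `q̄` factors
through `G/2G`. -/

theorem ZMod.eq_one_of_ne_zero_two {a : ZMod 2} (ha : a ≠ 0) : a = 1 :=
  Fin.eq_one_of_ne_zero a ha

namespace Module.Basis

variable {I V : Type*} [AddCommMonoid V] [Module (ZMod 2) V] (B : Basis I (ZMod 2) V)

theorem repr_eq_one_of_mem_support {v : V} {i : I} (hi : i ∈ (B.repr v).support) :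
    B.repr v i = 1 :=
  ZMod.eq_one_of_ne_zero_two (Finsupp.mem_support_iff.mp hi)

theorem sum_support_repr_zmod_two (v : V) : ∑ i ∈ (B.repr v).support, B i = v := by
  conv_rhs => rw [← B.linearCombination_repr v]
  rw [Finsupp.linearCombination_apply, Finsupp.sum]
  exact Finset.sum_congr rfl fun i hi => by rw [B.repr_eq_one_of_mem_support hi, one_smul]

end Module.Basis

theorem stmt_18_general {G M V : Type*} [AddCommGroup G] [AddCommGroup M]
    [AddCommGroup V] [Module (ZMod 2) V] {I : Type*}
    (π : G →+ V)
    (B : Module.Basis I (ZMod 2) V) (lift : I → G) (hlift : ∀ i, π (lift i) = B i)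
    (t : G → G → M)
    (qb : G →+ M)
    (hqbfactor : ∀ x y : G, π x = π y → qb x = qb y)
    (q : G → M) (hq : ∀ x : G, q x = t x x + qb x)
    (c : G → G → M)
    (hc : ∀ x y : G, c x y = t x y +
      ∑ i ∈ (B.repr (π x)).support,
        ((B.repr (π x)) i * (B.repr (π y)) i).val • qb (lift i)) :
    ∀ x : G, c x x = q x := by
  intro x
  set s := (B.repr (π x)).support
  have hdiag : ∑ i ∈ s, ((B.repr (π x)) i * (B.repr (π x)) i).val • qb (lift i)
      = qb (∑ i ∈ s, lift i) := by
    rw [map_sum]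
    refine Finset.sum_congr rfl fun i hi => ?_
    rw [B.repr_eq_one_of_mem_support hi, mul_one, ZMod.val_one, one_smul]
  have hlift_sum : π (∑ i ∈ s, lift i) = π x := by
    simp only [map_sum, hlift, s, B.sum_support_repr_zmod_two]
  rw [hc, hq, hdiag, hqbfactor _ _ hlift_sum]

/-- Let `q` be a polar quadratic form, written `q(x) = t(x,x) + q̄(x)` with `t`
ℤ-bilinear and `q̄` a homomorphism into the 2-torsion of `M` factoring through
the quotient map `π : G → G/2G`.  Fix an `𝔽₂`-basis `(β i)` of `G/2G` with
lifts to `G` and define `c(x,y) := t(x,y) + ∑ᵢ x̄ᵢ ȳᵢ q̄(βᵢ)`.  Then the trace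
of `c` recovers `q`: `c(x,x) = q(x)` for all `x`. -/
theorem stmt_18 {G M V : Type*} [AddCommGroup G] [AddCommGroup M]
    [AddCommGroup V] [Module (ZMod 2) V] {I : Type*}
    (π : G →+ V) (hπsurj : Function.Surjective π)
    (hπ2 : ∀ x : G, π ((2 : ℤ) • x) = 0)
    (B : Module.Basis I (ZMod 2) V) (lift : I → G) (hlift : ∀ i, π (lift i) = B i)
    (t : G → G → M)
    (ht₁ : ∀ x x' y : G, t (x + x') y = t x y + t x' y)
    (ht₂ : ∀ x y y' : G, t x (y + y') = t x y + t x y')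
    (qb : G →+ M) (hqb2 : ∀ x : G, (2 : ℤ) • qb x = 0)
    (hqbfactor : ∀ x y : G, π x = π y → qb x = qb y)
    (q : G → M) (hq : ∀ x : G, q x = t x x + qb x)
    (c : G → G → M)
    (hc : ∀ x y : G, c x y = t x y +
      ∑ i ∈ (B.repr (π x)).support,
        ((B.repr (π x)) i * (B.repr (π y)) i).val • qb (lift i)) :
    ∀ x : G, c x x = q x :=
  stmt_18_general π B lift hlift t qb hqbfactor q hq c hc
end
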